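/- arXiv:cond-mat/0508377 — 4 statements merged into one kernel-verified Lean document; each statement's English description precedes it below -/
import Mathlib

section
/- (Coproduct for the left reflection algebra.) Let d, m, m̃ be positive integers and η ∈ ℂ. Let R : ℂ → End(ℂ^d ⊗ ℂ^d) satisfy the Yang–Baxter equation R₁₂(λ−μ)R₁₃(λ−ν)R₂₃(μ−ν) = R₂₃(μ−ν)R₁₃(λ−ν)R₁₂(λ−μ) for all λ, μ, ν, together with P R(λ) P = R(λ), R(λ)^{t₁t₂} = R(λ), and R(λ)R(−λ) = ρ(λ)·Id with ρ(λ) ≠ 0 for all λ. Let T(λ) be a d×d matrix-valued function with entries in End(ℂ^m) satisfying the Yang–Baxter algebra relation R₁₂(λ−μ)T₁(λ)T₂(μ) = T₂(μ)T₁(λ)R₁₂(λ−μ) on ℂ^d ⊗ ℂ^d ⊗ ℂ^m for all λ, μ, and assume T(λ) is invertible as an operator on ℂ^d ⊗ ℂ^m for each λ. Let 𝒯̃⁻(λ) be a d×d matrix-valued function with entries in End(ℂ^{m̃}) satisfying the left reflection equation. Then 𝒯⁻(λ) := T(λ)·𝒯̃⁻(λ)·T(−λ)⁻¹, a d×d matrix-valued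 function with entries in End(ℂ^{m̃} ⊗ ℂ^m) (the entries of 𝒯̃⁻ acting in the first factor and those of T in the second), satisfies the left reflection equation. -/
/- STATEMENT 5: Coproduct for the left reflection algebra. -/

noncomputable section

open Complex Matrix Kronecker

/-- The permutation operator P on ℂ^d ⊗ ℂ^d. -/
def Pd (d : ℕ) : Matrix (Fin d × Fin d) (Fin d × Fin d) ℂ :=
  Matrix.of fun p q => if p.1 = q.2 ∧ p.2 = q.1 then 1 else 0

/-- Partial transposition in the first tensor factor of ℂ^d ⊗ ℂ^d. -/
def pt1 {d : ℕ} (M : Matrix (Fin d × Fin d) (Fin d × Fin d) ℂ) :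
    Matrix (Fin d × Fin d) (Fin d × Fin d) ℂ :=
  Matrix.of fun p q => M (q.1, p.2) (p.1, q.2)

/-- Partial transposition in the second tensor factor of ℂ^d ⊗ ℂ^d. -/
def pt2 {d : ℕ} (M : Matrix (Fin d × Fin d) (Fin d × Fin d) ℂ) :
    Matrix (Fin d × Fin d) (Fin d × Fin d) ℂ :=
  Matrix.of fun p q => M (p.1, q.2) (q.1, p.2)

/-- Embedding of an operator on ℂ^d ⊗ ℂ^d into the factors 1,2 of ℂ^d ⊗ ℂ^d ⊗ ℂ^d. -/
def r12 {d : ℕ} (M : Matrix (Fin d × Fin d) (Fin d × Fin d) ℂ) :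
    Matrix (Fin d × Fin d × Fin d) (Fin d × Fin d × Fin d) ℂ :=
  Matrix.of fun p q => M (p.1, p.2.1) (q.1, q.2.1) * (if p.2.2 = q.2.2 then 1 else 0)

/-- Embedding into the factors 1,3. -/
def r13 {d : ℕ} (M : Matrix (Fin d × Fin d) (Fin d × Fin d) ℂ) :
    Matrix (Fin d × Fin d × Fin d) (Fin d × Fin d × Fin d) ℂ :=
  Matrix.of fun p q => M (p.1, p.2.2) (q.1, q.2.2) * (if p.2.1 = q.2.1 then 1 else 0)

/-- Embedding into the factors 2,3. -/
def r23 {d : ℕ} (M : Matrix (Fin d × Fin d) (Fin d × Fin d) ℂ) :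
    Matrix (Fin d × Fin d × Fin d) (Fin d × Fin d × Fin d) ℂ :=
  Matrix.of fun p q => M (p.2.1, p.2.2) (q.2.1, q.2.2) * (if p.1 = q.1 then 1 else 0)

/-- A complex matrix on ℂ^d ⊗ ℂ^d viewed as a matrix with entries in the operator
algebra `A` of the quantum space. -/
def liftR {d : ℕ} {A : Type} [Semiring A] [Algebra ℂ A]
    (R : Matrix (Fin d × Fin d) (Fin d × Fin d) ℂ) :
    Matrix (Fin d × Fin d) (Fin d × Fin d) A :=
  R.map (algebraMap ℂ A)

/-- d×d matrix of operators with its d×d indices placed in the first ℂ^d factor. -/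
def emb1 {d : ℕ} {A : Type} [Zero A] (M : Matrix (Fin d) (Fin d) A) :
    Matrix (Fin d × Fin d) (Fin d × Fin d) A :=
  Matrix.of fun p q => if p.2 = q.2 then M p.1 q.1 else 0

/-- d×d indices placed in the second ℂ^d factor. -/
def emb2 {d : ℕ} {A : Type} [Zero A] (M : Matrix (Fin d) (Fin d) A) :
    Matrix (Fin d × Fin d) (Fin d × Fin d) A :=
  Matrix.of fun p q => if p.1 = q.1 then M p.2 q.2 else 0

/-- The Yang–Baxter algebra relation `R₁₂(λ−μ)T₁(λ)T₂(μ) = T₂(μ)T₁(λ)R₁₂(λ−μ)`. -/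
def YBA {d : ℕ} (R : ℂ → Matrix (Fin d × Fin d) (Fin d × Fin d) ℂ)
    {A : Type} [Semiring A] [Algebra ℂ A] (T : ℂ → Matrix (Fin d) (Fin d) A) : Prop :=
  ∀ lam mu : ℂ,
    liftR (R (lam - mu)) * emb1 (T lam) * emb2 (T mu) =
      emb2 (T mu) * emb1 (T lam) * liftR (R (lam - mu))

/-- The left reflection equation. -/
def LeftRefl {d : ℕ} (R : ℂ → Matrix (Fin d × Fin d) (Fin d × Fin d) ℂ)
    {A : Type} [Semiring A] [Algebra ℂ A] (𝒯 : ℂ → Matrix (Fin d) (Fin d) A) : Prop :=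
  ∀ lam mu : ℂ,
    liftR (R (lam - mu)) * emb1 (𝒯 lam) * liftR (R (lam + mu)) * emb2 (𝒯 mu) =
      emb2 (𝒯 mu) * liftR (R (lam + mu)) * emb1 (𝒯 lam) * liftR (R (lam - mu))

/-- Lift a d×d matrix of operators on ℂ^{m̃} to operators on ℂ^{m̃} ⊗ ℂ^m (first factor). -/
def lift1 {d mt m : ℕ} (M : Matrix (Fin d) (Fin d) (Matrix (Fin mt) (Fin mt) ℂ)) :
    Matrix (Fin d) (Fin d) (Matrix (Fin mt × Fin m) (Fin mt × Fin m) ℂ) :=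
  M.map fun X => X ⊗ₖ (1 : Matrix (Fin m) (Fin m) ℂ)

/-- Lift a d×d matrix of operators on ℂ^m to operators on ℂ^{m̃} ⊗ ℂ^m (second factor). -/
def lift2 {d mt m : ℕ} (M : Matrix (Fin d) (Fin d) (Matrix (Fin m) (Fin m) ℂ)) :
    Matrix (Fin d) (Fin d) (Matrix (Fin mt × Fin m) (Fin mt × Fin m) ℂ) :=
  M.map fun X => (1 : Matrix (Fin mt) (Fin mt) ℂ) ⊗ₖ X


/-! ### Auxiliary lemmas -/

section ReflAux

section MonoidAux
variable {G : Type*} [Monoid G]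

lemma RE_conj_move {x y c c' : G} (hc : c * c' = 1) (hc' : c' * c = 1)
    (h : x * c = c * y) : c' * x = y * c' := by
  have e1 : c' * (x * c) * c' = c' * x := by
    rw [← mul_assoc, mul_assoc (c' * x) c c', hc, mul_one]
  have e2 : c' * (c * y) * c' = y * c' := by
    rw [← mul_assoc, hc', one_mul]
  rw [← e1, h, e2]

lemma RE_cont2 {x y : G} (h : x * y = y * x) (t : G) : x * (y * t) = y * (x * t) := by
  rw [← mul_assoc, h, mul_assoc]

lemma RE_cont3 {r a b : G} (h : r * a * b = b * a * r) (t : G) :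
    r * (a * (b * t)) = b * (a * (r * t)) := by
  rw [← mul_assoc, ← mul_assoc, h, mul_assoc, mul_assoc]

lemma RE_cont4 {r b s c : G} (h : r * b * s * c = c * s * b * r) (t : G) :
    r * (b * (s * (c * t))) = c * (s * (b * (r * t))) := by
  rw [← mul_assoc, ← mul_assoc, ← mul_assoc, h, mul_assoc, mul_assoc, mul_assoc]

lemma RE_derive2 {r r' a a' b : G} (hr : r * r' = 1) (hr' : r' * r = 1)
    (ha : a * a' = 1) (ha' : a' * a = 1) (h : r * a * b = b * a * r) :
    a' * r' * b = b * r' * a' := by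
  have h0 : (b * a) * r = r * (a * b) := by rw [← mul_assoc]; exact h.symm
  have h1 := RE_conj_move hr hr' h0
  have h2 : (r' * b) * a = a * (b * r') := by
    rw [mul_assoc, h1, mul_assoc]
  have h3 := RE_conj_move ha ha' h2
  rw [mul_assoc, h3]

lemma RE_derive3 {r a b b' : G} (hb : b * b' = 1) (hb' : b' * b = 1)
    (h : r * a * b = b * a * r) : b' * r * a = a * r * b' := by
  have h0 : (r * a) * b = b * (a * r) := by rw [← mul_assoc]; exact h
  have h1 := RE_conj_move hb hb' h0
  rw [mul_assoc, h1]

lemma RE_derive4 {r a b a' b' : G} (ha : a * a' = 1) (ha' : a' * a = 1)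
    (hb : b * b' = 1) (hb' : b' * b = 1) (h : r * b * a = a * b * r) :
    r * a' * b' = b' * a' * r := by
  have h0 : (r * b) * a = a * (b * r) := by rw [← mul_assoc]; exact h
  have h1 := RE_conj_move ha ha' h0
  have h2 : (a' * r) * b = b * (r * a') := by
    rw [mul_assoc, h1, mul_assoc]
  have h3 := RE_conj_move hb hb' h2
  exact ((mul_assoc b' a' r).trans h3).symm

/-- The abstract version of the main calculation. -/
lemma RE_chain (r s A1 B1 C1 A2 B2 C2 : G)
    (R1 : r * A1 * A2 = A2 * A1 * r)
    (R2 : C1 * s * A2 = A2 * s * C1)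
    (R3 : C2 * s * A1 = A1 * s * C2)
    (R4 : r * C1 * C2 = C2 * C1 * r)
    (R5 : r * B1 * s * B2 = B2 * s * B1 * r)
    (cBA : B1 * A2 = A2 * B1) (cCB : C1 * B2 = B2 * C1)
    (cBC : B1 * C2 = C2 * B1) (cAB : A1 * B2 = B2 * A1) :
    r * (A1 * B1 * C1) * s * (A2 * B2 * C2) =
      A2 * B2 * C2 * s * (A1 * B1 * C1) * r := by
  have main : r * (A1 * (B1 * (C1 * (s * (A2 * (B2 * (C2 * (1 : G)))))))) =
      A2 * (B2 * (C2 * (s * (A1 * (B1 * (C1 * (r * (1 : G)))))))) := by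
    rw [RE_cont3 R2, RE_cont2 cBA, RE_cont3 R1, RE_cont2 cCB, RE_cont4 R5,
      RE_cont3 R4, RE_cont2 cBC, RE_cont2 cAB, RE_cont3 R3.symm]
  simpa only [mul_one, mul_assoc] using main

end MonoidAux

lemma RE_smul_cancel {V : Type*} [AddCommMonoid V] [Module ℂ V] {c : ℂ} (hc : c ≠ 0)
    {x y : V} (h : c • x = c • y) : x = y := by
  have := congrArg (fun z => c⁻¹ • z) h
  simpa [smul_smul, inv_mul_cancel₀ hc] using this

variable {d : ℕ} {A : Type} [Semiring A] [Algebra ℂ A]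

lemma emb1_mul (M N : Matrix (Fin d) (Fin d) A) : emb1 (M * N) = emb1 M * emb1 N := by
  ext ⟨p1,p2⟩ ⟨q1,q2⟩
  simp [emb1, Matrix.mul_apply, Fintype.sum_prod_type, ite_mul, mul_ite, Finset.sum_ite_eq,
    Finset.sum_ite_eq']

lemma emb2_mul (M N : Matrix (Fin d) (Fin d) A) : emb2 (M * N) = emb2 M * emb2 N := by
  ext ⟨p1,p2⟩ ⟨q1,q2⟩
  simp [emb2, Matrix.mul_apply, Fintype.sum_prod_type, ite_mul, mul_ite, Finset.sum_ite_eq,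
    Finset.sum_ite_eq']

lemma emb1_one : emb1 (1 : Matrix (Fin d) (Fin d) A) = 1 := by
  ext ⟨p1,p2⟩ ⟨q1,q2⟩
  simp only [emb1, Matrix.of_apply, Matrix.one_apply, Prod.ext_iff]
  by_cases h1 : p1 = q1 <;> by_cases h2 : p2 = q2 <;> simp [h1, h2]

lemma emb2_one : emb2 (1 : Matrix (Fin d) (Fin d) A) = 1 := by
  ext ⟨p1,p2⟩ ⟨q1,q2⟩
  simp only [emb2, Matrix.of_apply, Matrix.one_apply, Prod.ext_iff]
  by_cases h1 : p1 = q1 <;> by_cases h2 : p2 = q2 <;> simp [h1, h2]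

lemma emb1_emb2_comm (M N : Matrix (Fin d) (Fin d) A)
    (h : ∀ i j k l, M i j * N k l = N k l * M i j) :
    emb1 M * emb2 N = emb2 N * emb1 M := by
  ext ⟨p1,p2⟩ ⟨q1,q2⟩
  simp [emb1, emb2, Matrix.mul_apply, Fintype.sum_prod_type, ite_mul, mul_ite,
    Finset.sum_ite_eq, Finset.sum_ite_eq', h]

lemma emb1_map {B : Type} [Semiring B] (f : A →+* B) (M : Matrix (Fin d) (Fin d) A) :
    (emb1 M).map f = emb1 (M.map f) := by
  ext ⟨p1,p2⟩ ⟨q1,q2⟩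
  simp [emb1, Matrix.map_apply, apply_ite f]

lemma emb2_map {B : Type} [Semiring B] (f : A →+* B) (M : Matrix (Fin d) (Fin d) A) :
    (emb2 M).map f = emb2 (M.map f) := by
  ext ⟨p1,p2⟩ ⟨q1,q2⟩
  simp [emb2, Matrix.map_apply, apply_ite f]

lemma liftR_mul (X Y : Matrix (Fin d × Fin d) (Fin d × Fin d) ℂ) :
    (liftR (X * Y) : Matrix _ _ A) = liftR X * liftR Y := by
  simp [liftR, Matrix.map_mul (f := algebraMap ℂ A)]

lemma liftR_one : (liftR (1 : Matrix (Fin d × Fin d) (Fin d × Fin d) ℂ) : Matrix _ _ A) = 1 := by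
  simp [liftR]

lemma liftR_smul (c : ℂ) (X : Matrix (Fin d × Fin d) (Fin d × Fin d) ℂ) :
    (liftR (c • X) : Matrix _ _ A) = c • liftR X := by
  ext p q
  simp only [liftR, Matrix.map_apply, Matrix.smul_apply, smul_eq_mul, _root_.map_mul]
  rw [Algebra.smul_def]

lemma liftR_map {B : Type} [Semiring B] [Algebra ℂ B] (f : A →+* B)
    (hf : ∀ c : ℂ, f (algebraMap ℂ A c) = algebraMap ℂ B c)
    (X : Matrix (Fin d × Fin d) (Fin d × Fin d) ℂ) :
    (liftR X : Matrix _ _ A).map f = liftR X := by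
  ext p q
  simp [liftR, Matrix.map_apply, hf]

lemma Pd_conj (X : Matrix (Fin d × Fin d) (Fin d × Fin d) ℂ) :
    Pd d * X * Pd d =
      X.submatrix ⇑(Equiv.prodComm (Fin d) (Fin d)) ⇑(Equiv.prodComm (Fin d) (Fin d)) := by
  ext ⟨p1,p2⟩ ⟨q1,q2⟩
  simp [Pd, Matrix.mul_apply, Fintype.sum_prod_type, ite_and, ite_mul, mul_ite,
    Finset.sum_ite_eq, Finset.sum_ite_eq']

lemma emb1_submatrix (M : Matrix (Fin d) (Fin d) A) :
    (emb1 M).submatrix ⇑(Equiv.prodComm (Fin d) (Fin d)) ⇑(Equiv.prodComm (Fin d) (Fin d)) =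
      emb2 M := by
  ext ⟨p1,p2⟩ ⟨q1,q2⟩
  simp [emb1, emb2]

lemma emb2_submatrix (M : Matrix (Fin d) (Fin d) A) :
    (emb2 M).submatrix ⇑(Equiv.prodComm (Fin d) (Fin d)) ⇑(Equiv.prodComm (Fin d) (Fin d)) =
      emb1 M := by
  ext ⟨p1,p2⟩ ⟨q1,q2⟩
  simp [emb1, emb2]

lemma RE_submatrix_mul (M N : Matrix (Fin d × Fin d) (Fin d × Fin d) A)
    (e : (Fin d × Fin d) ≃ (Fin d × Fin d)) :
    (M * N).submatrix ⇑e ⇑e = M.submatrix ⇑e ⇑e * N.submatrix ⇑e ⇑e :=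
  (Matrix.submatrix_mul_equiv M N ⇑e e ⇑e).symm

lemma liftR_submatrix {X : Matrix (Fin d × Fin d) (Fin d × Fin d) ℂ}
    (hX : Pd d * X * Pd d = X) :
    (liftR X : Matrix _ _ A).submatrix
      ⇑(Equiv.prodComm (Fin d) (Fin d)) ⇑(Equiv.prodComm (Fin d) (Fin d)) = liftR X := by
  have h := (Pd_conj X).symm.trans hX
  unfold liftR
  rw [Matrix.submatrix_map, h]

/-- Conjugating an exchange relation by the permutation operator swaps the two
auxiliary spaces. -/
lemma RE_swap12 {X : Matrix (Fin d × Fin d) (Fin d × Fin d) ℂ} (hX : Pd d * X * Pd d = X)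
    {M N M' N' : Matrix (Fin d) (Fin d) A}
    (h : liftR X * emb1 M * emb2 N = emb2 N' * emb1 M' * liftR X) :
    liftR X * emb2 M * emb1 N = emb1 N' * emb2 M' * liftR X := by
  have h2 := congrArg
    (fun Y : Matrix (Fin d × Fin d) (Fin d × Fin d) A =>
      Y.submatrix ⇑(Equiv.prodComm (Fin d) (Fin d)) ⇑(Equiv.prodComm (Fin d) (Fin d))) h
  simpa only [RE_submatrix_mul, emb1_submatrix, emb2_submatrix, liftR_submatrix hX] using h2

/-- Operators acting in the first Kronecker factor, as a ring hom. -/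
def kf1 (mt m : ℕ) : Matrix (Fin mt) (Fin mt) ℂ →+* Matrix (Fin mt × Fin m) (Fin mt × Fin m) ℂ where
  toFun X := X ⊗ₖ (1 : Matrix (Fin m) (Fin m) ℂ)
  map_one' := Matrix.one_kronecker_one
  map_mul' X Y := by rw [← Matrix.mul_kronecker_mul, one_mul]
  map_zero' := Matrix.zero_kronecker 1
  map_add' X Y := Matrix.add_kronecker X Y 1

/-- Operators acting in the second Kronecker factor, as a ring hom. -/
def kf2 (mt m : ℕ) : Matrix (Fin m) (Fin m) ℂ →+* Matrix (Fin mt × Fin m) (Fin mt × Fin m) ℂ where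
  toFun X := (1 : Matrix (Fin mt) (Fin mt) ℂ) ⊗ₖ X
  map_one' := Matrix.one_kronecker_one
  map_mul' X Y := by rw [← Matrix.mul_kronecker_mul, one_mul]
  map_zero' := Matrix.kronecker_zero 1
  map_add' X Y := Matrix.kronecker_add 1 X Y

lemma kf1_algebraMap (mt m : ℕ) (c : ℂ) :
    kf1 mt m (algebraMap ℂ _ c) = algebraMap ℂ _ c := by
  ext ⟨i1,i2⟩ ⟨j1,j2⟩
  simp [kf1, Matrix.algebraMap_matrix_apply, Matrix.kroneckerMap_apply, Matrix.one_apply,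
    Prod.ext_iff, ite_and]
  split <;> simp_all

lemma kf2_algebraMap (mt m : ℕ) (c : ℂ) :
    kf2 mt m (algebraMap ℂ _ c) = algebraMap ℂ _ c := by
  ext ⟨i1,i2⟩ ⟨j1,j2⟩
  simp [kf2, Matrix.algebraMap_matrix_apply, Matrix.kroneckerMap_apply, Matrix.one_apply,
    Prod.ext_iff, ite_and]
  split <;> simp_all

lemma kf_comm (mt m : ℕ) (X : Matrix (Fin mt) (Fin mt) ℂ) (Y : Matrix (Fin m) (Fin m) ℂ) :
    kf1 mt m X * kf2 mt m Y = kf2 mt m Y * kf1 mt m X := by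
  show (X ⊗ₖ 1) * (1 ⊗ₖ Y) = (1 ⊗ₖ Y) * (X ⊗ₖ 1)
  rw [← Matrix.mul_kronecker_mul, ← Matrix.mul_kronecker_mul, one_mul, mul_one, one_mul, mul_one]

lemma lift1_eq {d mt m : ℕ} (M : Matrix (Fin d) (Fin d) (Matrix (Fin mt) (Fin mt) ℂ)) :
    lift1 (m := m) M = M.map ⇑(kf1 mt m) := rfl

lemma lift2_eq {d mt m : ℕ} (M : Matrix (Fin d) (Fin d) (Matrix (Fin m) (Fin m) ℂ)) :
    lift2 (mt := mt) M = M.map ⇑(kf2 mt m) := rfl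

lemma lift2_mul {d mt m : ℕ} (M N : Matrix (Fin d) (Fin d) (Matrix (Fin m) (Fin m) ℂ)) :
    lift2 (mt := mt) (M * N) = lift2 M * lift2 N := by
  rw [lift2_eq, lift2_eq, lift2_eq, Matrix.map_mul (f := kf2 mt m)]

lemma lift2_one {d mt m : ℕ} :
    lift2 (mt := mt) (1 : Matrix (Fin d) (Fin d) (Matrix (Fin m) (Fin m) ℂ)) = 1 := by
  rw [lift2_eq, Matrix.map_one ⇑(kf2 mt m) (map_zero _) (map_one _)]

end ReflAux

/-- (Sklyanin.) If `T(λ)` is an invertible representation of the Yang–Baxter algebra of a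
symmetric unitary R-matrix satisfying the Yang–Baxter equation, and `𝒯̃⁻(λ)` satisfies the
left reflection equation, then `𝒯⁻(λ) = T(λ)·𝒯̃⁻(λ)·T(−λ)⁻¹` satisfies the left
reflection equation. -/
theorem left_reflection_coproduct (d m mt : ℕ) (hd : 0 < d) (hm : 0 < m) (hmt : 0 < mt)
    (η : ℂ) (R : ℂ → Matrix (Fin d × Fin d) (Fin d × Fin d) ℂ) (ρ : ℂ → ℂ)
    (hybe : ∀ lam mu nu : ℂ,
      r12 (R (lam - mu)) * r13 (R (lam - nu)) * r23 (R (mu - nu)) =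
        r23 (R (mu - nu)) * r13 (R (lam - nu)) * r12 (R (lam - mu)))
    (hsymP : ∀ lam : ℂ, Pd d * R lam * Pd d = R lam)
    (hsymT : ∀ lam : ℂ, pt2 (pt1 (R lam)) = R lam)
    (hρ : ∀ lam : ℂ, ρ lam ≠ 0)
    (huni : ∀ lam : ℂ, R lam * R (-lam) = ρ lam • 1)
    (T Tinv : ℂ → Matrix (Fin d) (Fin d) (Matrix (Fin m) (Fin m) ℂ))
    (hT : YBA R T)
    (hTinv : ∀ lam : ℂ, T lam * Tinv lam = 1 ∧ Tinv lam * T lam = 1)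
    (𝒯t : ℂ → Matrix (Fin d) (Fin d) (Matrix (Fin mt) (Fin mt) ℂ))
    (h𝒯t : LeftRefl R 𝒯t) :
    LeftRefl R (fun lam => lift2 (m := m) (T lam) * lift1 (𝒯t lam) * lift2 (Tinv (-lam))) := by
  intro lam mu
  -- lifted Yang–Baxter algebra relation for T
  have bigT : ∀ x y : ℂ,
      liftR (R (x - y)) * emb1 (lift2 (mt := mt) (T x)) * emb2 (lift2 (mt := mt) (T y)) =
        emb2 (lift2 (mt := mt) (T y)) * emb1 (lift2 (mt := mt) (T x)) * liftR (R (x - y)) := by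
    intro x y
    have h := congrArg (fun M => M.map ⇑(kf2 mt m)) (hT x y)
    simp only [Matrix.map_mul (f := kf2 mt m), emb1_map, emb2_map,
      liftR_map (kf2 mt m) (kf2_algebraMap mt m), ← lift2_eq] at h
    exact h
  -- lifted reflection relation for 𝒯t
  have bigS : ∀ x y : ℂ,
      liftR (R (x - y)) * emb1 (lift1 (m := m) (𝒯t x)) * liftR (R (x + y)) *
          emb2 (lift1 (m := m) (𝒯t y)) =
        emb2 (lift1 (m := m) (𝒯t y)) * liftR (R (x + y)) * emb1 (lift1 (m := m) (𝒯t x)) *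
          liftR (R (x - y)) := by
    intro x y
    have h := congrArg (fun M => M.map ⇑(kf1 mt m)) (h𝒯t x y)
    simp only [Matrix.map_mul (f := kf1 mt m), emb1_map, emb2_map,
      liftR_map (kf1 mt m) (kf1_algebraMap mt m), ← lift1_eq] at h
    exact h
  -- lifted inverses of T
  have hTT : ∀ x : ℂ, lift2 (mt := mt) (T x) * lift2 (Tinv x) = 1 := by
    intro x; rw [← lift2_mul, (hTinv x).1, lift2_one]
  have hTT' : ∀ x : ℂ, lift2 (mt := mt) (Tinv x) * lift2 (T x) = 1 := by
    intro x; rw [← lift2_mul, (hTinv x).2, lift2_one]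
  have inv1 : ∀ x : ℂ,
      emb1 (lift2 (mt := mt) (T x)) * emb1 (lift2 (Tinv x)) = 1 := by
    intro x; rw [← emb1_mul, hTT, emb1_one]
  have inv1' : ∀ x : ℂ,
      emb1 (lift2 (mt := mt) (Tinv x)) * emb1 (lift2 (T x)) = 1 := by
    intro x; rw [← emb1_mul, hTT', emb1_one]
  have inv2 : ∀ x : ℂ,
      emb2 (lift2 (mt := mt) (T x)) * emb2 (lift2 (Tinv x)) = 1 := by
    intro x; rw [← emb2_mul, hTT, emb2_one]
  have inv2' : ∀ x : ℂ,
      emb2 (lift2 (mt := mt) (Tinv x)) * emb2 (lift2 (T x)) = 1 := by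
    intro x; rw [← emb2_mul, hTT', emb2_one]
  -- lifted unitarity of R
  have runi : ∀ x : ℂ,
      (liftR (R x) : Matrix (Fin d × Fin d) (Fin d × Fin d)
          (Matrix (Fin mt × Fin m) (Fin mt × Fin m) ℂ)) * ((ρ x)⁻¹ • liftR (R (-x))) = 1 ∧
        ((ρ x)⁻¹ • liftR (R (-x))) *
          (liftR (R x) : Matrix (Fin d × Fin d) (Fin d × Fin d)
            (Matrix (Fin mt × Fin m) (Fin mt × Fin m) ℂ)) = 1 := by
    intro x
    have h1 : R x * ((ρ x)⁻¹ • R (-x)) = 1 := by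
      rw [Matrix.mul_smul, huni x, smul_smul, inv_mul_cancel₀ (hρ x), one_smul]
    have h2 : ((ρ x)⁻¹ • R (-x)) * R x = 1 := mul_eq_one_comm.mp h1
    constructor
    · rw [← liftR_smul, ← liftR_mul, h1, liftR_one]
    · rw [← liftR_smul, ← liftR_mul, h2, liftR_one]
  -- the index-swapped lifted Yang–Baxter algebra relation
  have bigT' : ∀ x y : ℂ,
      liftR (R (x - y)) * emb2 (lift2 (mt := mt) (T x)) * emb1 (lift2 (mt := mt) (T y)) =
        emb1 (lift2 (mt := mt) (T y)) * emb2 (lift2 (mt := mt) (T x)) * liftR (R (x - y)) := by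
    intro x y
    exact RE_swap12 (hsymP (x - y)) (bigT x y)
  -- commutation of the two quantum spaces
  have comm12 : ∀ (X : Matrix (Fin d) (Fin d) (Matrix (Fin mt) (Fin mt) ℂ))
      (Y : Matrix (Fin d) (Fin d) (Matrix (Fin m) (Fin m) ℂ)),
      emb1 (lift1 (m := m) X) * emb2 (lift2 (mt := mt) Y) =
        emb2 (lift2 (mt := mt) Y) * emb1 (lift1 (m := m) X) :=
    fun X Y => emb1_emb2_comm _ _ (fun i j k l => kf_comm mt m (X i j) (Y k l))
  have comm21 : ∀ (Y : Matrix (Fin d) (Fin d) (Matrix (Fin m) (Fin m) ℂ))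
      (X : Matrix (Fin d) (Fin d) (Matrix (Fin mt) (Fin mt) ℂ)),
      emb1 (lift2 (mt := mt) Y) * emb2 (lift1 (m := m) X) =
        emb2 (lift1 (m := m) X) * emb1 (lift2 (mt := mt) Y) :=
    fun Y X => emb1_emb2_comm _ _ (fun i j k l => (kf_comm mt m (X k l) (Y i j)).symm)
  -- exchange relation R2 : C1 * s * A2 = A2 * s * C1
  have R2 : emb1 (lift2 (mt := mt) (Tinv (-lam))) * liftR (R (lam + mu)) *
        emb2 (lift2 (mt := mt) (T mu)) =
      emb2 (lift2 (mt := mt) (T mu)) * liftR (R (lam + mu)) *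
        emb1 (lift2 (mt := mt) (Tinv (-lam))) := by
    have harg : -(-lam - mu) = lam + mu := by ring
    have hu := runi (-lam - mu)
    rw [harg] at hu
    have h := RE_derive2 hu.1 hu.2 (inv1 (-lam)) (inv1' (-lam)) (bigT (-lam) mu)
    rw [Matrix.mul_smul, Matrix.smul_mul, Matrix.mul_smul, Matrix.smul_mul] at h
    have h2 := RE_smul_cancel (inv_ne_zero (hρ (-lam - mu))) h
    simpa only [← mul_assoc] using h2
  -- exchange relation R3 : C2 * s * A1 = A1 * s * C2
  have R3 : emb2 (lift2 (mt := mt) (Tinv (-mu))) * liftR (R (lam + mu)) *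
        emb1 (lift2 (mt := mt) (T lam)) =
      emb1 (lift2 (mt := mt) (T lam)) * liftR (R (lam + mu)) *
        emb2 (lift2 (mt := mt) (Tinv (-mu))) := by
    have h := bigT lam (-mu)
    rw [sub_neg_eq_add] at h
    exact RE_derive3 (inv2 (-mu)) (inv2' (-mu)) h
  -- exchange relation R4 : r * C1 * C2 = C2 * C1 * r
  have R4 : liftR (R (lam - mu)) * emb1 (lift2 (mt := mt) (Tinv (-lam))) *
        emb2 (lift2 (mt := mt) (Tinv (-mu))) =
      emb2 (lift2 (mt := mt) (Tinv (-mu))) * emb1 (lift2 (mt := mt) (Tinv (-lam))) *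
        liftR (R (lam - mu)) := by
    have harg : -mu - -lam = lam - mu := by ring
    have h := bigT' (-mu) (-lam)
    rw [harg] at h
    exact RE_derive4 (inv1 (-lam)) (inv1' (-lam)) (inv2 (-mu)) (inv2' (-mu)) h
  -- assemble
  show liftR (R (lam - mu)) *
      emb1 (lift2 (mt := mt) (T lam) * lift1 (𝒯t lam) * lift2 (Tinv (-lam))) *
      liftR (R (lam + mu)) *
      emb2 (lift2 (mt := mt) (T mu) * lift1 (𝒯t mu) * lift2 (Tinv (-mu))) = _
  rw [emb1_mul, emb1_mul, emb2_mul, emb2_mul]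
  exact RE_chain (liftR (R (lam - mu))) (liftR (R (lam + mu)))
    (emb1 (lift2 (mt := mt) (T lam))) (emb1 (lift1 (m := m) (𝒯t lam)))
    (emb1 (lift2 (mt := mt) (Tinv (-lam))))
    (emb2 (lift2 (mt := mt) (T mu))) (emb2 (lift1 (m := m) (𝒯t mu)))
    (emb2 (lift2 (mt := mt) (Tinv (-mu))))
    (bigT lam mu) R2 R3 R4 (bigS lam mu)
    (comm12 (𝒯t lam) (T mu)) (comm21 (Tinv (-lam)) (𝒯t mu))
    (comm12 (𝒯t lam) (Tinv (-mu))) (comm21 (T lam) (𝒯t mu))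


end
end

section
/- (Independence of the generating function of the factorization.) Let d, m⁺, m⁻ be positive integers and η ∈ ℂ. Let R : ℂ → End(ℂ^d ⊗ ℂ^d) satisfy the Yang–Baxter equation, P R(λ) P = R(λ), R(λ)^{t₁t₂} = R(λ), R(λ)R(−λ) = ρ(λ)·Id and R^{t₁}(λ)R^{t₁}(−λ−2η) = ρ̃(λ)·Id with ρ(λ), ρ̃(λ) ≠ 0 for all λ. Let T⁻(λ), T⁺(λ) be d×d matrix-valued functions with entries in End(ℂ^{m⁻}) resp. End(ℂ^{m⁺}), each satisfying the Yang–Baxter algebra relation R₁₂(λ−μ)T₁(λ)T₂(μ) = T₂(μ)T₁(λ)R₁₂(λ−μ) and each invertible as an operator on ℂ^d ⊗ ℂ^{m∓} for every λ. Let K⁻(λ), K⁺(λ) be c-number (d×d complex matrix-valued) solutions of the left resp. right reflection equation with R. Define 𝒯⁻(λ) = T⁻(λ)K⁻(λ)T⁻(−λ)⁻¹ and 𝒯⁺(λ)^t = T⁺(λ)^t·K⁺(λ)^t·(T⁺(−λ)⁻¹)^t (transposes in the d×d indices). Then tr[𝒯⁺(λ)𝒯⁻(λ)] = tr[K⁺(λ)·T(λ)·K⁻(λ)·T(−λ)⁻¹]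 as operators on ℂ^{m⁺} ⊗ ℂ^{m⁻}, where T(λ) = T⁺(λ)T⁻(λ) (entries of T⁺ acting in the first factor, of T⁻ in the second) and tr denotes the trace over the d×d auxiliary indices. -/
/- STATEMENT 7: Independence of the generating function of the factorization. -/

noncomputable section

open Complex Matrix Kronecker

/-- The right reflection equation. -/
def RightRefl {d : ℕ} (η : ℂ) (R : ℂ → Matrix (Fin d × Fin d) (Fin d × Fin d) ℂ)
    {A : Type} [Semiring A] [Algebra ℂ A] (𝒯 : ℂ → Matrix (Fin d) (Fin d) A) : Prop :=
  ∀ lam mu : ℂ,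
    liftR (R (-lam + mu)) * emb1 ((𝒯 lam)ᵀ) * liftR (R (-lam - mu - 2 * η)) *
        emb2 ((𝒯 mu)ᵀ) =
      emb2 ((𝒯 mu)ᵀ) * liftR (R (-lam - mu - 2 * η)) * emb1 ((𝒯 lam)ᵀ) *
        liftR (R (-lam + mu))

/-- A d×d complex matrix viewed as a d×d matrix of operators (scalars). -/
def liftK {d m : ℕ} (K : Matrix (Fin d) (Fin d) ℂ) :
    Matrix (Fin d) (Fin d) (Matrix (Fin m) (Fin m) ℂ) :=
  K.map (algebraMap ℂ (Matrix (Fin m) (Fin m) ℂ))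

/-- A d×d complex matrix viewed as a d×d matrix of operators on ℂ^{m⁺} ⊗ ℂ^{m⁻}. -/
def liftK2 {d mp mm : ℕ} (K : Matrix (Fin d) (Fin d) ℂ) :
    Matrix (Fin d) (Fin d) (Matrix (Fin mp × Fin mm) (Fin mp × Fin mm) ℂ) :=
  K.map (algebraMap ℂ (Matrix (Fin mp × Fin mm) (Fin mp × Fin mm) ℂ))

/-! Auxiliary lemmas for the proof. -/

lemma aux_sum_kron {mp mm : ℕ} {ι : Type*} (s : Finset ι)
    (f : ι → Matrix (Fin mp) (Fin mp) ℂ) (B : Matrix (Fin mm) (Fin mm) ℂ) :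
    (∑ i ∈ s, f i) ⊗ₖ B = ∑ i ∈ s, f i ⊗ₖ B := by
  ext ⟨p, q⟩ ⟨r, t⟩
  simp [Matrix.kroneckerMap_apply, Finset.sum_mul, Matrix.sum_apply]

lemma aux_kron_sum {mp mm : ℕ} {ι : Type*} (s : Finset ι)
    (A : Matrix (Fin mp) (Fin mp) ℂ) (f : ι → Matrix (Fin mm) (Fin mm) ℂ) :
    A ⊗ₖ (∑ i ∈ s, f i) = ∑ i ∈ s, A ⊗ₖ f i := by
  ext ⟨p, q⟩ ⟨r, t⟩
  simp [Matrix.kroneckerMap_apply, Finset.mul_sum, Matrix.sum_apply]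

def aux_perm6 {d : ℕ} : (Fin d × Fin d × Fin d × Fin d × Fin d × Fin d) ≃
    (Fin d × Fin d × Fin d × Fin d × Fin d × Fin d) where
  toFun t := (t.2.2.1, t.2.2.2.2.2, t.2.1, t.2.2.2.1, t.1, t.2.2.2.2.1)
  invFun u := (u.2.2.2.2.1, u.2.2.1, u.1, u.2.2.2.1, u.2.2.2.2.2, u.2.1)
  left_inv _ := rfl
  right_inv _ := rfl

lemma aux_sum6 {d : ℕ} {M : Type*} [AddCommMonoid M]
    (F : Fin d → Fin d → Fin d → Fin d → Fin d → Fin d → M) :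
    (∑ a, ∑ b, ∑ c, ∑ e, ∑ f, ∑ g, F a b c e f g) =
      ∑ a, ∑ b, ∑ c, ∑ e, ∑ f, ∑ g, F c g b e a f := by
  have h1 : (∑ t : Fin d × Fin d × Fin d × Fin d × Fin d × Fin d,
      F t.1 t.2.1 t.2.2.1 t.2.2.2.1 t.2.2.2.2.1 t.2.2.2.2.2) =
      ∑ a, ∑ b, ∑ c, ∑ e, ∑ f, ∑ g, F a b c e f g := by
    simp [Fintype.sum_prod_type]
  have h2 : (∑ t : Fin d × Fin d × Fin d × Fin d × Fin d × Fin d,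
      F (aux_perm6 t).1 (aux_perm6 t).2.1 (aux_perm6 t).2.2.1 (aux_perm6 t).2.2.2.1
        (aux_perm6 t).2.2.2.2.1 (aux_perm6 t).2.2.2.2.2) =
      ∑ a, ∑ b, ∑ c, ∑ e, ∑ f, ∑ g, F c g b e a f := by
    simp [aux_perm6, Fintype.sum_prod_type]
  rw [← h1, ← h2]
  exact (Equiv.sum_comp aux_perm6
    (fun t => F t.1 t.2.1 t.2.2.1 t.2.2.2.1 t.2.2.2.2.1 t.2.2.2.2.2)).symm

/-- The factorization identity is purely algebraic: it holds for arbitrary matrices. -/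
lemma aux_key {d mp mm : ℕ}
    (A A' : Matrix (Fin d) (Fin d) (Matrix (Fin mp) (Fin mp) ℂ))
    (B B' : Matrix (Fin d) (Fin d) (Matrix (Fin mm) (Fin mm) ℂ))
    (Kp Km : Matrix (Fin d) (Fin d) ℂ) :
    Matrix.trace (lift1 (mt := mp) (m := mm) ((Aᵀ * (liftK Kp)ᵀ * A'ᵀ)ᵀ) *
        lift2 (B * liftK Km * B')) =
      Matrix.trace (liftK2 (mp := mp) (mm := mm) Kp * (lift1 A * lift2 B) * liftK2 Km *
        (lift2 B' * lift1 A')) := by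
  simp only [Matrix.trace, Matrix.diag, Matrix.mul_apply, liftK, liftK2, lift1, lift2,
    Matrix.transpose_apply, Matrix.map_apply, Algebra.algebraMap_eq_smul_one,
    smul_mul_assoc, mul_smul_comm, Matrix.one_mul, Matrix.mul_one,
    Finset.sum_mul, Finset.mul_sum, Finset.smul_sum, aux_sum_kron, aux_kron_sum,
    ← Matrix.mul_kronecker_mul, Matrix.smul_kronecker, Matrix.kronecker_smul, smul_smul]
  exact aux_sum6 fun x x1 x2 x3 x4 x5 =>
    (Km x3 x2 * Kp x4 x5) • ((A x5 x1 * A' x x4) ⊗ₖ (B x1 x3 * B' x2 x))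

/-- The generating function `t(λ) = tr[𝒯⁺(λ)𝒯⁻(λ)]` built from
`𝒯⁻(λ) = T⁻(λ)K⁻(λ)T⁻(−λ)⁻¹` and `𝒯⁺(λ)ᵗ = T⁺(λ)ᵗK⁺(λ)ᵗ(T⁺(−λ)⁻¹)ᵗ` is independent of
the factorization: it equals `tr[K⁺(λ)T(λ)K⁻(λ)T(−λ)⁻¹]` with `T(λ) = T⁺(λ)T⁻(λ)`. -/

theorem generating_function_factorization (d mp mm : ℕ)
    (hd : 0 < d) (hmp : 0 < mp) (hmm : 0 < mm)
    (η : ℂ) (R : ℂ → Matrix (Fin d × Fin d) (Fin d × Fin d) ℂ) (ρ ρt : ℂ → ℂ)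
    (hybe : ∀ lam mu nu : ℂ,
      r12 (R (lam - mu)) * r13 (R (lam - nu)) * r23 (R (mu - nu)) =
        r23 (R (mu - nu)) * r13 (R (lam - nu)) * r12 (R (lam - mu)))
    (hsymP : ∀ lam : ℂ, Pd d * R lam * Pd d = R lam)
    (hsymT : ∀ lam : ℂ, pt2 (pt1 (R lam)) = R lam)
    (hρ : ∀ lam : ℂ, ρ lam ≠ 0) (hρt : ∀ lam : ℂ, ρt lam ≠ 0)
    (huni : ∀ lam : ℂ, R lam * R (-lam) = ρ lam • 1)
    (hcross : ∀ lam : ℂ, pt1 (R lam) * pt1 (R (-lam - 2 * η)) = ρt lam • 1)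
    (Tm Tminv : ℂ → Matrix (Fin d) (Fin d) (Matrix (Fin mm) (Fin mm) ℂ))
    (Tp Tpinv : ℂ → Matrix (Fin d) (Fin d) (Matrix (Fin mp) (Fin mp) ℂ))
    (hTm : YBA R Tm) (hTp : YBA R Tp)
    (hTminv : ∀ lam : ℂ, Tm lam * Tminv lam = 1 ∧ Tminv lam * Tm lam = 1)
    (hTpinv : ∀ lam : ℂ, Tp lam * Tpinv lam = 1 ∧ Tpinv lam * Tp lam = 1)
    (Km Kp : ℂ → Matrix (Fin d) (Fin d) ℂ)
    (hKm : LeftRefl R Km) (hKp : RightRefl η R Kp) :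
    ∀ lam : ℂ,
      Matrix.trace
        (lift1 (mt := mp) (m := mm)
            (((Tp lam)ᵀ * (liftK (Kp lam))ᵀ * (Tpinv (-lam))ᵀ)ᵀ) *
          lift2 (Tm lam * liftK (Km lam) * Tminv (-lam))) =
      Matrix.trace
        (liftK2 (mp := mp) (mm := mm) (Kp lam) *
          (lift1 (Tp lam) * lift2 (Tm lam)) * liftK2 (Km lam) *
          (lift2 (Tminv (-lam)) * lift1 (Tpinv (-lam)))) :=
  fun lam => aux_key (Tp lam) (Tpinv (-lam)) (Tm lam) (Tminv (-lam)) (Kp lam) (Km lam)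

end
end

section
/- (Quantum transfer matrix as a dressed inhomogeneous row-to-row monodromy matrix.) For all λ ∈ ℂ for which all sinh-denominators appearing are nonzero, the quantum monodromy matrix satisfies, entrywise as a 2×2 matrix of operators on (ℂ²)^{⊗N}: T^{QTM}(λ) = a(λ) · S · T(λ|ξ₁,…,ξ_N) · S, where a(λ) = b(−β/N−λ)^{N/2}, S = σ^y_N σ^y_{N−2} ··· σ^y_2 (a product of σ^y acting at the even sites, with S² = Id), T(λ|ξ₁,…,ξ_N) = L_N(λ,ξ_N)L_{N−1}(λ,ξ_{N−1})···L_1(λ,ξ_1), and ξ_j = η − β/N for even j, ξ_j = β/N for odd j; the conjugation by S applies to each of the four operator entries. -/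
noncomputable section

open Complex Matrix Filter

/-- `b(λ) = sinh(λ)/sinh(λ+η)`. -/
def bf (η lam : ℂ) : ℂ := Complex.sinh lam / Complex.sinh (lam + η)

/-- `c(λ) = sinh(η)/sinh(λ+η)`. -/
def cf (η lam : ℂ) : ℂ := Complex.sinh η / Complex.sinh (lam + η)

/-- Pauli matrix σʸ. -/
def sigy : Matrix (Fin 2) (Fin 2) ℂ := !![0, -Complex.I; Complex.I, 0]

/-- `e_n^{αβ}`: the elementary 2×2 matrix with entry 1 in row α, column β, at site n
of (ℂ²)^{⊗N}. -/
def Ee {N : ℕ} (n : Fin N) (α β : Fin 2) :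
    Matrix (Fin N → Fin 2) (Fin N → Fin 2) ℂ :=
  Matrix.of fun s s' => if s n = α ∧ s' = Function.update s n β then 1 else 0

/-- A one-site operator acting on the site n of (ℂ²)^{⊗N}. -/
def emb1c {N : ℕ} (n : Fin N) (M : Matrix (Fin 2) (Fin 2) ℂ) :
    Matrix (Fin N → Fin 2) (Fin N → Fin 2) ℂ :=
  Matrix.of fun s s' => M (s n) (s' n) * (if s = Function.update s' n (s n) then 1 else 0)

/-- The XXZ L-matrix `L_n(λ,μ)`, a 2×2 matrix of operators on (ℂ²)^{⊗N}. -/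
def Lmat {N : ℕ} (η : ℂ) (n : Fin N) (lam mu : ℂ) :
    Matrix (Fin 2) (Fin 2) (Matrix (Fin N → Fin 2) (Fin N → Fin 2) ℂ) :=
  !![Ee n 0 0 + bf η (lam - mu) • Ee n 1 1, cf η (lam - mu) • Ee n 1 0;
     cf η (lam - mu) • Ee n 0 1, bf η (lam - mu) • Ee n 0 0 + Ee n 1 1]

/-- The XXZ L-matrix `L̃_n(μ,λ)`. -/
def Ltil {N : ℕ} (η : ℂ) (n : Fin N) (mu lam : ℂ) :
    Matrix (Fin 2) (Fin 2) (Matrix (Fin N → Fin 2) (Fin N → Fin 2) ℂ) :=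
  !![Ee n 0 0 + bf η (mu - lam) • Ee n 1 1, cf η (mu - lam) • Ee n 0 1;
     cf η (mu - lam) • Ee n 1 0, bf η (mu - lam) • Ee n 0 0 + Ee n 1 1]

/-- The quantum monodromy matrix
`T^{QTM}(λ) = L̃_N(−β/N,λ)L_{N−1}(λ,β/N)···L̃_2(−β/N,λ)L_1(λ,β/N)`
(sites are numbered 0,…,N−1 here, so the original site j corresponds to index j−1 and
the even original sites are the odd indices). -/
def Tqtm (η : ℂ) (N : ℕ) (β : ℂ) (lam : ℂ) :
    Matrix (Fin 2) (Fin 2) (Matrix (Fin N → Fin 2) (Fin N → Fin 2) ℂ) :=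
  ((List.ofFn fun j : Fin N =>
    if (j : ℕ) % 2 = 1 then Ltil η j (-β / N) lam else Lmat η j lam (β / N)).reverse).prod

/-- `a(λ) = b(−β/N−λ)^{N/2}`. -/
def aQ (η : ℂ) (N : ℕ) (β : ℂ) (lam : ℂ) : ℂ := bf η (-β / N - lam) ^ (N / 2)

/-- The inhomogeneities: `ξ_j = η − β/N` for even original j (odd index), `ξ_j = β/N`
for odd original j (even index). -/
def xiQ (η : ℂ) (N : ℕ) (β : ℂ) (j : Fin N) : ℂ :=
  if (j : ℕ) % 2 = 1 then η - β / N else β / N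

/-- The inhomogeneous row-to-row monodromy matrix
`T(λ|ξ₁,…,ξ_N) = L_N(λ,ξ_N)···L_1(λ,ξ_1)`. -/
def Trtr (η : ℂ) (N : ℕ) (ξ : Fin N → ℂ) (lam : ℂ) :
    Matrix (Fin 2) (Fin 2) (Matrix (Fin N → Fin 2) (Fin N → Fin 2) ℂ) :=
  ((List.ofFn fun j : Fin N => Lmat η j lam (ξ j)).reverse).prod

/-- `S = σ^y_N σ^y_{N−2} ··· σ^y_2`, the product of σʸ over the even original sites
(odd indices). -/
def SOp (N : ℕ) : Matrix (Fin N → Fin 2) (Fin N → Fin 2) ℂ :=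
  (List.ofFn fun j : Fin N => if (j : ℕ) % 2 = 1 then emb1c j sigy else 1).prod

/-!
Every L-matrix is the image, under the embedding of `2 × 2` matrices at its site, of an explicit
`2 × 2` matrix of `2 × 2` matrices. On that matrix the crossing symmetry
`L̃_n(μ, λ) = b(μ - λ) σʸ_n L_n(λ, μ + η) σʸ_n` is a finite check, which uses
`b(x) b(y) = 1` and `c(x) = -b(x) c(y)` for `x + y = -η`. So each factor of `T^{QTM}(λ)` at an
even site is `b(-β/N - λ)` times the corresponding factor of `T(λ|ξ)` conjugated by `σʸ` at that
site. Operators at different sites commute, hence the conjugations gather into `S` on both sides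
of the product and the scalars into `a(λ)`.
-/

namespace List

variable {ι M : Type*} [Monoid M]

lemma prod_map_smul {R : Type*} [Monoid R] [MulAction R M] [IsScalarTower R M M]
    [SMulCommClass R M M] (c : ι → R) (a : ι → M) (l : List ι) :
    (l.map fun i => c i • a i).prod = (l.map c).prod • (l.map a).prod := by
  induction l with
  | nil => simp
  | cons i t ih => simp only [map_cons, prod_cons, ih, smul_mul_smul]

lemma prod_map_mul_mul_of_commute (g a : ι → M) {l : List ι} (hl : l.Nodup)
    (hga : ∀ i j, i ≠ j → Commute (g i) (a j)) (hgg : ∀ i j, i ≠ j → Commute (g i) (g j)) :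
    (l.map fun i => g i * a i * g i).prod = (l.map g).prod * (l.map a).prod * (l.map g).prod := by
  induction l with
  | nil => simp
  | cons i t ih =>
    obtain ⟨hit, ht⟩ := nodup_cons.mp hl
    have hne : ∀ j ∈ t, i ≠ j := fun j hj h => hit (h ▸ hj)
    have hgG : Commute (g i) (t.map g).prod :=
      Commute.list_prod_right _ _ fun _ hx => by
        obtain ⟨j, hj, rfl⟩ := mem_map.mp hx; exact hgg i j (hne j hj)
    have hgA : Commute (g i) (t.map a).prod :=
      Commute.list_prod_right _ _ fun _ hx => by
        obtain ⟨j, hj, rfl⟩ := mem_map.mp hx; exact hga i j (hne j hj)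
    have haG : Commute (a i) (t.map g).prod :=
      Commute.list_prod_right _ _ fun _ hx => by
        obtain ⟨j, hj, rfl⟩ := mem_map.mp hx; exact (hga j i (hne j hj).symm).symm
    simp only [map_cons, prod_cons]
    rw [ih ht]
    simp only [mul_assoc]
    rw [hgA.symm.left_comm, haG.symm.left_comm, hgG.symm.left_comm]

end List

lemma prod_range_ite_odd {M : Type*} [CommMonoid M] (b : M) (m : ℕ) :
    ∏ k ∈ Finset.range m, (if k % 2 = 1 then b else 1) = b ^ (m / 2) := by
  induction m with
  | zero => simp
  | succ m ih =>
    rw [Finset.prod_range_succ, ih]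
    split_ifs
    · rw [← pow_succ]; congr 1; omega
    · rw [mul_one]; congr 1; omega

namespace Matrix

variable {n α : Type*} [Fintype n] [DecidableEq n] [Semiring α]

lemma scalar_commute_of_forall_commute {r : α} {M : Matrix n n α}
    (h : ∀ i j, Commute r (M i j)) : Commute (scalar n r) M :=
  scalar_commute_iff.mpr <| ext fun i j => (h i j).eq

lemma scalar_mul_mul_scalar (r : α) (M : Matrix n n α) :
    scalar n r * M * scalar n r = M.map (r * · * r) := by
  ext i j
  simp [scalar_apply, diagonal_mul, mul_diagonal]

end Matrix

lemma sum_ite_eq_update_eq_sum {ι α M : Type*} [Fintype ι] [DecidableEq ι] [Fintype α]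
    [DecidableEq α] [AddCommMonoid M] (s : ι → α) (n : ι) (g : (ι → α) → M) :
    ∑ s', (if s = Function.update s' n (s n) then g s' else 0) =
      ∑ a, g (Function.update s n a) := by
  rw [← Finset.sum_filter]
  have hfilter : Finset.univ.filter (fun s' => s = Function.update s' n (s n)) =
      Finset.univ.image (Function.update s n) := by
    ext s'
    simp only [Finset.mem_filter, Finset.mem_univ, true_and, Finset.mem_image]
    constructor
    · intro h
      exact ⟨s' n, by rw [h]; simp⟩
    · rintro ⟨a, rfl⟩
      simp
  rw [hfilter, Finset.sum_image (Function.update_injective s n).injOn]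

section SiteOperators

variable {N : ℕ}

lemma emb1c_mulVec (n : Fin N) (M : Matrix (Fin 2) (Fin 2) ℂ) (v : (Fin N → Fin 2) → ℂ) :
    emb1c n M *ᵥ v = fun s => ∑ a, M (s n) a * v (Function.update s n a) := by
  ext s
  simp only [mulVec, dotProduct, emb1c, of_apply, mul_ite, mul_one, mul_zero, ite_mul, zero_mul]
  rw [sum_ite_eq_update_eq_sum]
  simp

lemma emb1c_zero (n : Fin N) : emb1c n 0 = 0 := by
  ext s s'
  simp [emb1c]

lemma emb1c_one (n : Fin N) : emb1c n 1 = 1 := by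
  rw [ext_iff_mulVec]
  intro v
  ext s
  simp [emb1c_mulVec, one_apply]

lemma emb1c_add (n : Fin N) (M M' : Matrix (Fin 2) (Fin 2) ℂ) :
    emb1c n (M + M') = emb1c n M + emb1c n M' := by
  ext s s'
  simp only [emb1c, of_apply, Matrix.add_apply, add_mul]

lemma emb1c_smul (n : Fin N) (c : ℂ) (M : Matrix (Fin 2) (Fin 2) ℂ) :
    emb1c n (c • M) = c • emb1c n M := by
  ext s s'
  simp [emb1c]

lemma emb1c_mul (n : Fin N) (M M' : Matrix (Fin 2) (Fin 2) ℂ) :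
    emb1c n (M * M') = emb1c n M * emb1c n M' := by
  rw [ext_iff_mulVec]
  intro v
  ext s
  simp only [emb1c_mulVec, ← mulVec_mulVec, Function.update_self, Function.update_idem,
    mul_apply, Finset.mul_sum, Finset.sum_mul, mul_assoc]
  exact Finset.sum_comm

lemma emb1c_commute {n m : Fin N} (hnm : n ≠ m) (M M' : Matrix (Fin 2) (Fin 2) ℂ) :
    Commute (emb1c n M) (emb1c m M') := by
  rw [Commute, SemiconjBy, ext_iff_mulVec]
  intro v
  ext s
  simp only [emb1c_mulVec, ← mulVec_mulVec, Function.update_of_ne hnm,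
    Function.update_of_ne hnm.symm, Function.update_comm hnm, Finset.mul_sum]
  rw [Finset.sum_comm]
  simp only [mul_left_comm]

def siteAlgHom (n : Fin N) :
    Matrix (Fin 2) (Fin 2) ℂ →ₐ[ℂ] Matrix (Fin N → Fin 2) (Fin N → Fin 2) ℂ where
  toFun := emb1c n
  map_one' := emb1c_one n
  map_mul' := emb1c_mul n
  map_zero' := emb1c_zero n
  map_add' := emb1c_add n
  commutes' c := by
    simp only [Algebra.algebraMap_eq_smul_one, emb1c_smul, emb1c_one]

@[simp]
lemma siteAlgHom_apply (n : Fin N) (M : Matrix (Fin 2) (Fin 2) ℂ) :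
    siteAlgHom n M = emb1c n M := rfl

lemma Ee_eq_emb1c_single (n : Fin N) (α β : Fin 2) :
    Ee n α β = emb1c n (single α β 1) := by
  rw [ext_iff_mulVec]
  intro v
  rw [emb1c_mulVec]
  ext s
  simp [Ee, mulVec, dotProduct, single_apply, ite_and, eq_comm]

end SiteOperators

def localL (η x : ℂ) : Matrix (Fin 2) (Fin 2) (Matrix (Fin 2) (Fin 2) ℂ) :=
  !![!![1, 0; 0, bf η x], !![0, 0; cf η x, 0]; !![0, cf η x; 0, 0], !![bf η x, 0; 0, 1]]

lemma Lmat_eq_map_localL {N : ℕ} (η : ℂ) (n : Fin N) (lam mu : ℂ) :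
    Lmat η n lam mu = (localL η (lam - mu)).map (emb1c n) := by
  ext i k : 2
  fin_cases i <;> fin_cases k <;>
    simp [Lmat, localL, Ee_eq_emb1c_single, ← emb1c_smul, ← emb1c_add] <;>
    congr 1 <;> ext a b <;> fin_cases a <;> fin_cases b <;> simp

lemma Ltil_eq_map_localL_transpose {N : ℕ} (η : ℂ) (n : Fin N) (mu lam : ℂ) :
    Ltil η n mu lam = (localL η (mu - lam))ᵀ.map (emb1c n) := by
  ext i k : 2
  fin_cases i <;> fin_cases k <;>
    simp [Ltil, localL, Ee_eq_emb1c_single, ← emb1c_smul, ← emb1c_add] <;>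
    congr 1 <;> ext a b <;> fin_cases a <;> fin_cases b <;> simp

section Crossing

variable {η x y : ℂ}

lemma bf_mul_bf_of_add_eq_neg (hxy : x + y = -η)
    (hx : Complex.sinh (x + η) ≠ 0) (hy : Complex.sinh (y + η) ≠ 0) :
    bf η x * bf η y = 1 := by
  have hsx : Complex.sinh (x + η) = -Complex.sinh y := by
    rw [show x + η = -y by linear_combination hxy, Complex.sinh_neg]
  have hsy : Complex.sinh (y + η) = -Complex.sinh x := by
    rw [show y + η = -x by linear_combination hxy, Complex.sinh_neg]
  rw [hsx, ne_eq, neg_eq_zero] at hx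
  rw [hsy, ne_eq, neg_eq_zero] at hy
  unfold bf
  rw [hsx, hsy]
  field_simp

lemma cf_eq_neg_bf_mul_cf_of_add_eq_neg (hxy : x + y = -η) (hy : Complex.sinh (y + η) ≠ 0) :
    cf η x = -(bf η x * cf η y) := by
  have hsy : Complex.sinh (y + η) = -Complex.sinh x := by
    rw [show y + η = -x by linear_combination hxy, Complex.sinh_neg]
  rw [hsy, ne_eq, neg_eq_zero] at hy
  unfold bf cf
  rw [hsy]
  field_simp

lemma localL_transpose_eq_smul_conj_sigy (hxy : x + y = -η)
    (hx : Complex.sinh (x + η) ≠ 0) (hy : Complex.sinh (y + η) ≠ 0) :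
    (localL η x)ᵀ = bf η x • (scalar (Fin 2) sigy * localL η y * scalar (Fin 2) sigy) := by
  have hbb := bf_mul_bf_of_add_eq_neg hxy hx hy
  have hc := cf_eq_neg_bf_mul_cf_of_add_eq_neg hxy hy
  have hI (z : ℂ) : Complex.I * (z * Complex.I) = -z := by
    rw [mul_left_comm, Complex.I_mul_I, mul_neg_one]
  ext i k a b
  fin_cases i <;> fin_cases k <;> fin_cases a <;> fin_cases b <;>
    simp [localL, sigy, Matrix.mul_apply, hI, hbb, hc]

end Crossing

lemma Ltil_eq_smul_conj_sigy {N : ℕ} (η : ℂ) (n : Fin N) (mu lam : ℂ)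
    (hx : Complex.sinh (mu - lam + η) ≠ 0) (hy : Complex.sinh (lam - mu) ≠ 0) :
    Ltil η n mu lam = bf η (mu - lam) •
      (scalar (Fin 2) (emb1c n sigy) * Lmat η n lam (mu + η) * scalar (Fin 2) (emb1c n sigy)) := by
  have hy' : Complex.sinh (lam - (mu + η) + η) ≠ 0 := by rwa [sub_add_eq_sub_sub, sub_add_cancel]
  have hmap (X : Matrix (Fin 2) (Fin 2) (Matrix (Fin 2) (Fin 2) ℂ)) :
      X.map (emb1c n) = (siteAlgHom n).mapMatrix X := rfl
  have hscalar :
      scalar (Fin 2) (emb1c n sigy) = (siteAlgHom n).mapMatrix (scalar (Fin 2) sigy) := by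
    simp [Matrix.scalar_apply, Matrix.diagonal_map, emb1c_zero]
  rw [Ltil_eq_map_localL_transpose, Lmat_eq_map_localL,
    localL_transpose_eq_smul_conj_sigy (by ring) hx hy', hscalar, hmap, hmap, map_smul, map_mul,
    map_mul]

lemma sigy_mul_sigy : sigy * sigy = 1 := by
  ext i j
  fin_cases i <;> fin_cases j <;> simp [sigy]

section QTM

variable {N : ℕ}

def sigyOnOdd (j : Fin N) : Matrix (Fin N → Fin 2) (Fin N → Fin 2) ℂ :=
  emb1c j (if (j : ℕ) % 2 = 1 then sigy else 1)

def qtmWeight (η : ℂ) (N : ℕ) (β lam : ℂ) (j : Fin N) : ℂ :=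
  if (j : ℕ) % 2 = 1 then bf η (-β / N - lam) else 1

lemma sigyOnOdd_mul_self (j : Fin N) : sigyOnOdd j * sigyOnOdd j = 1 := by
  rw [sigyOnOdd, ← emb1c_mul]
  split_ifs
  · rw [sigy_mul_sigy, emb1c_one]
  · rw [one_mul, emb1c_one]

lemma sigyOnOdd_commute {i j : Fin N} (hij : i ≠ j) : Commute (sigyOnOdd i) (sigyOnOdd j) :=
  emb1c_commute hij _ _

lemma SOp_eq_prod_sigyOnOdd (N : ℕ) : SOp N = ((List.finRange N).map sigyOnOdd).prod := by
  rw [SOp, List.ofFn_eq_map]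
  congr 2
  funext j
  rw [sigyOnOdd]
  split_ifs
  · rfl
  · exact (emb1c_one j).symm

lemma SOp_eq_prod_reverse_sigyOnOdd (N : ℕ) :
    SOp N = ((List.finRange N).reverse.map sigyOnOdd).prod := by
  rw [SOp_eq_prod_sigyOnOdd]
  refine (((List.reverse_perm _).map _).prod_eq' ?_).symm
  exact List.Pairwise.map _ (fun _ _ => sigyOnOdd_commute)
    (List.nodup_reverse.mpr (List.nodup_finRange N))

lemma SOp_mul_SOp (N : ℕ) : SOp N * SOp N = 1 := by
  have h := List.prod_map_mul_mul_of_commute sigyOnOdd (fun _ => 1) (List.nodup_finRange N)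
    (fun _ _ _ => Commute.one_right _) (fun _ _ => sigyOnOdd_commute)
  simp only [mul_one, sigyOnOdd_mul_self, List.map_const', List.prod_replicate, one_pow] at h
  rw [SOp_eq_prod_sigyOnOdd, h]

lemma commute_scalar_sigyOnOdd_Lmat {i j : Fin N} (hij : i ≠ j) (η lam mu : ℂ) :
    Commute (scalar (Fin 2) (sigyOnOdd i)) (Lmat η j lam mu) := by
  refine Matrix.scalar_commute_of_forall_commute fun a b => ?_
  rw [Lmat_eq_map_localL]
  exact emb1c_commute hij _ _

lemma prod_reverse_scalar_sigyOnOdd (N : ℕ) :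
    ((List.finRange N).reverse.map fun j => scalar (Fin 2) (sigyOnOdd j)).prod =
      scalar (Fin 2) (SOp N) := by
  rw [SOp_eq_prod_reverse_sigyOnOdd, map_list_prod, List.map_map]
  rfl

lemma Trtr_eq_prod_reverse (η : ℂ) (N : ℕ) (ξ : Fin N → ℂ) (lam : ℂ) :
    Trtr η N ξ lam = ((List.finRange N).reverse.map fun j => Lmat η j lam (ξ j)).prod := by
  rw [Trtr, List.ofFn_eq_map, List.map_reverse]

lemma prod_reverse_qtmWeight (η : ℂ) (N : ℕ) (β lam : ℂ) :
    ((List.finRange N).reverse.map (qtmWeight η N β lam)).prod = aQ η N β lam := by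
  rw [List.map_reverse, List.prod_reverse, ← List.ofFn_eq_map, List.prod_ofFn]
  exact (Fin.prod_univ_eq_prod_range
    (fun k => if k % 2 = 1 then bf η (-β / N - lam) else 1) N).trans (prod_range_ite_odd _ N)

lemma qtm_factor_eq_smul_conj (η β lam : ℂ) (j : Fin N)
    (h2 : Complex.sinh (-β / N - lam + η) ≠ 0) (h3 : Complex.sinh (lam + β / N) ≠ 0) :
    (if (j : ℕ) % 2 = 1 then Ltil η j (-β / N) lam else Lmat η j lam (β / N)) =
      qtmWeight η N β lam j • (scalar (Fin 2) (sigyOnOdd j) * Lmat η j lam (xiQ η N β j) *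
        scalar (Fin 2) (sigyOnOdd j)) := by
  unfold qtmWeight sigyOnOdd xiQ
  split_ifs
  · rw [Ltil_eq_smul_conj_sigy η j _ lam h2 (by rwa [neg_div, sub_neg_eq_add]),
      show -β / (N : ℂ) + η = η - β / N by ring]
  · rw [emb1c_one, map_one, one_mul, mul_one, one_smul]

lemma Tqtm_eq_prod_reverse_smul_conj (η β lam : ℂ)
    (h2 : Complex.sinh (-β / N - lam + η) ≠ 0) (h3 : Complex.sinh (lam + β / N) ≠ 0) :
    Tqtm η N β lam = ((List.finRange N).reverse.map fun j =>
      qtmWeight η N β lam j • (scalar (Fin 2) (sigyOnOdd j) * Lmat η j lam (xiQ η N β j) *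
        scalar (Fin 2) (sigyOnOdd j))).prod := by
  simp_rw [Tqtm, List.ofFn_eq_map, ← List.map_reverse, qtm_factor_eq_smul_conj η β lam _ h2 h3]

end QTM

theorem qtm_eq_dressed_row_to_row_general (η : ℂ)
    (N : ℕ) (β lam : ℂ)
    (h2 : Complex.sinh (-β / N - lam + η) ≠ 0)
    (h3 : Complex.sinh (lam + β / N) ≠ 0) :
    SOp N * SOp N = 1 ∧
    Tqtm η N β lam =
      aQ η N β lam •
        (Trtr η N (xiQ η N β) lam).map fun X => SOp N * X * SOp N := by
  refine ⟨SOp_mul_SOp N, ?_⟩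
  have hsites : (List.finRange N).reverse.Nodup := List.nodup_reverse.mpr (List.nodup_finRange N)
  rw [Tqtm_eq_prod_reverse_smul_conj η β lam h2 h3, List.prod_map_smul, prod_reverse_qtmWeight,
    List.prod_map_mul_mul_of_commute _ _ hsites
      (fun _ _ hij => commute_scalar_sigyOnOdd_Lmat hij ..)
      (fun _ _ hij => (sigyOnOdd_commute hij).map (scalar (Fin 2))),
    prod_reverse_scalar_sigyOnOdd, ← Trtr_eq_prod_reverse, Matrix.scalar_mul_mul_scalar]

/-- `T^{QTM}(λ) = a(λ)·S·T(λ|ξ₁,…,ξ_N)·S`, with `a(λ) = b(−β/N−λ)^{N/2}`,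
`ξ_j = η−β/N` for even j and `ξ_j = β/N` for odd j, and `S² = Id`; the conjugation by S
applies to each of the four operator entries. -/
theorem qtm_eq_dressed_row_to_row (η : ℂ) (hη : Complex.sinh η ≠ 0)
    (N : ℕ) (hN2 : 2 ≤ N) (hNeven : Even N) (β lam : ℂ)
    (h1 : Complex.sinh (lam - β / N + η) ≠ 0)
    (h2 : Complex.sinh (-β / N - lam + η) ≠ 0)
    (h3 : Complex.sinh (lam + β / N) ≠ 0) :
    SOp N * SOp N = 1 ∧
    Tqtm η N β lam =
      aQ η N β lam •
        (Trtr η N (xiQ η N β) lam).map fun X => SOp N * X * SOp N :=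
  qtm_eq_dressed_row_to_row_general η N β lam h2 h3

end
end

section
/- (Quantum determinant inversion formula for the XXZ monodromy matrix.) Let N ≥ 1, ξ₁,…,ξ_N ∈ ℂ, and let T(λ) = L_N(λ,ξ_N)···L_1(λ,ξ_1) be the 2×2 monodromy matrix with operator entries on (ℂ²)^{⊗N}. Then, for every λ ∈ ℂ such that sinh(λ−ξ_j+η) ≠ 0, sinh(λ−ξ_j) ≠ 0 and sinh(λ−ξ_j−η) ≠ 0 for all j, one has [σ^y · T^t(λ−η) · σ^y] · T(λ) = [∏_{j=1}^{N} b(λ−ξ_j−η)] · Id, where the transpose and the conjugation by σ^y are taken in the 2×2 auxiliary indices and the product on the left is the product of 2×2 operator-valued matrices; equivalently T(λ)⁻¹ = σ^y T^t(λ−η) σ^y / det_q T(λ) with det_q T(λ) = ∏_{j=1}^{N} b(λ−ξ_j−η). -/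
/- STATEMENT 16: Quantum determinant inversion formula for the XXZ monodromy matrix. -/

noncomputable section

open Complex Matrix Filter

/-- σʸ acting on the 2×2 auxiliary indices. -/
def sigyOp (N : ℕ) : Matrix (Fin 2) (Fin 2) (Matrix (Fin N → Fin 2) (Fin N → Fin 2) ℂ) :=
  sigy.map (algebraMap ℂ (Matrix (Fin N → Fin 2) (Fin N → Fin 2) ℂ))


/-!
Each factor is inverted by its own σʸ-conjugated transpose:
`σʸ L_n(λ−η,ξ)ᵗ σʸ · L_n(λ,ξ) = b(λ−ξ−η)`, which comes down to the two identities
`c(x) = c(x−η) b(x)` and `b(x−η) = b(x) − c(x) c(x−η)`, the latter being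
`sinh(x+η) sinh(x−η) = sinh² x − sinh² η`. The L-matrices at different sites have mutually
commuting entries, so the transpose of their product is the reversed product of the
transposes; since σʸ squares to one, the one-site inversions then collapse the product from
the inside out.
-/

theorem Complex.sinh_add_mul_sinh_sub (x y : ℂ) :
    Complex.sinh (x + y) * Complex.sinh (x - y) = Complex.sinh x ^ 2 - Complex.sinh y ^ 2 := by
  rw [Complex.sinh_add, Complex.sinh_sub]
  linear_combination
    Complex.sinh x ^ 2 * Complex.cosh_sq y - Complex.sinh y ^ 2 * Complex.cosh_sq x

lemma cf_eq_cf_sub_mul_bf (η x : ℂ) (hx : Complex.sinh x ≠ 0) :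
    cf η x = cf η (x - η) * bf η x := by
  rw [cf, cf, bf, sub_add_cancel]
  field_simp

lemma bf_sub_eq_bf_sub_cf_mul_cf (η x : ℂ) (hx : Complex.sinh x ≠ 0)
    (hxη : Complex.sinh (x + η) ≠ 0) :
    bf η (x - η) = bf η x - cf η x * cf η (x - η) := by
  rw [bf, bf, cf, cf, sub_add_cancel]
  field_simp
  linear_combination Complex.sinh_add_mul_sinh_sub x η

namespace Matrix

variable {n R : Type*} [Fintype n]

lemma transpose_mul_of_commute [NonUnitalNonAssocSemiring R] (A B : Matrix n n R)
    (h : ∀ i j k l, Commute (A i j) (B k l)) : (A * B)ᵀ = Bᵀ * Aᵀ := by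
  ext i k
  simp only [transpose_apply, mul_apply]
  exact Finset.sum_congr rfl fun j _ => (h k j j i).eq

lemma commute_list_prod_apply [DecidableEq n] [Semiring R] (x : R) (l : List (Matrix n n R))
    (hl : ∀ M ∈ l, ∀ i j, Commute x (M i j)) (i j : n) : Commute x (l.prod i j) := by
  induction l generalizing i with
  | nil =>
    rw [List.prod_nil, one_apply]
    split
    · exact Commute.one_right x
    · exact Commute.zero_right x
  | cons M l ih =>
    rw [List.prod_cons, mul_apply]
    exact Commute.sum_right _ _ _ fun k _ =>
      (hl M List.mem_cons_self i k).mul_right (ih (fun M' hM' => hl M' (.tail M hM')) k)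

theorem mul_transpose_list_prod_mul_mul_list_prod {ι K : Type*} [DecidableEq n] [CommSemiring K]
    [Semiring R] [Algebra K R] (S : Matrix n n R) (hS : S * S = 1) (f g : ι → Matrix n n R)
    (c : ι → K) (hfg : ∀ i, S * (f i)ᵀ * S * g i = c i • 1)
    (hf : ∀ i j, i ≠ j → ∀ a b a' b', Commute (f i a b) (f j a' b'))
    (l : List ι) (hl : l.Nodup) :
    S * (l.map f).prodᵀ * S * (l.map g).prod = (l.map c).prod • 1 := by
  induction l with
  | nil => simp [hS]
  | cons i l ih =>
    obtain ⟨hi, hl⟩ := List.nodup_cons.mp hl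
    have hcomm : ∀ a b a' b', Commute (f i a b) ((l.map f).prod a' b') := fun a b =>
      commute_list_prod_apply _ _ <| by
        simp only [List.mem_map]
        rintro _ ⟨j, hj, rfl⟩
        exact hf i j (fun hij => hi (hij ▸ hj)) a b
    calc S * (f i * (l.map f).prod)ᵀ * S * (g i * (l.map g).prod)
        = S * (l.map f).prodᵀ * S * (S * (f i)ᵀ * S * g i) * (l.map g).prod := by
          rw [transpose_mul_of_commute _ _ hcomm]
          simp only [mul_assoc, ← mul_assoc S S, hS, one_mul]
      _ = (List.map c (i :: l)).prod • 1 := by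
          rw [hfg, Matrix.mul_smul, mul_one, Matrix.smul_mul, ih hl, smul_smul, List.map_cons,
            List.prod_cons, mul_comm]

end Matrix

section Operators

variable {N : ℕ}

lemma Ee_mul_apply (n : Fin N) (α β : Fin 2) (M : Matrix (Fin N → Fin 2) (Fin N → Fin 2) ℂ)
    (s s' : Fin N → Fin 2) :
    (Ee n α β * M) s s' = if s n = α then M (Function.update s n β) s' else 0 := by
  rw [Matrix.mul_apply, Finset.sum_eq_single (Function.update s n β)]
  · by_cases h : s n = α <;> simp [Ee, h]
  · intro t _ ht
    simp [Ee, ht]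
  · simp

lemma Ee_mul_Ee (n : Fin N) (α β γ δ : Fin 2) :
    Ee n α β * Ee n γ δ = if β = γ then Ee n α δ else 0 := by
  ext s s'
  rw [Ee_mul_apply]
  by_cases h1 : β = γ <;> by_cases h2 : s n = α <;> simp [Ee, h1, h2, Function.update_idem]

lemma Ee_zero_zero_add_Ee_one_one (n : Fin N) : Ee n 0 0 + Ee n 1 1 = 1 := by
  ext s s'
  have hu : Function.update s n (s n) = s := Function.update_eq_self n s
  rcases Fin.exists_fin_two.mp ⟨s n, rfl⟩ with h | h <;>
    rw [h] at hu <;> simp [Ee, h, Matrix.one_apply, hu, eq_comm]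

lemma Ee_commute_of_ne {n m : Fin N} (h : n ≠ m) (α β γ δ : Fin 2) :
    Commute (Ee n α β) (Ee m γ δ) := by
  ext s s'
  rw [Ee_mul_apply, Ee_mul_apply]
  by_cases hn : s n = α <;> by_cases hm : s m = γ <;>
    simp [Ee, hn, hm, Function.update_of_ne h, Function.update_of_ne h.symm,
      Function.update_comm h]

lemma sigyOp_eq (N : ℕ) : sigyOp N = !![0, (-Complex.I) • 1; Complex.I • 1, 0] := by
  refine Matrix.ext fun i j => ?_
  fin_cases i <;> fin_cases j <;> simp [sigyOp, sigy, Algebra.algebraMap_eq_smul_one]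

lemma sigyOp_mul_self (N : ℕ) : sigyOp N * sigyOp N = 1 := by
  rw [sigyOp_eq]
  refine Matrix.ext fun i j => ?_
  fin_cases i <;> fin_cases j <;>
    simp [Matrix.mul_apply, smul_smul, Complex.I_mul_I]

lemma sigyOp_mul_transpose_mul_sigyOp
    (M : Matrix (Fin 2) (Fin 2) (Matrix (Fin N → Fin 2) (Fin N → Fin 2) ℂ)) :
    sigyOp N * Mᵀ * sigyOp N = !![M 1 1, -M 0 1; -M 1 0, M 0 0] := by
  rw [sigyOp_eq]
  refine Matrix.ext fun i j => ?_
  fin_cases i <;> fin_cases j <;>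
    simp [Matrix.mul_apply, Matrix.vecMul, dotProduct, Fin.sum_univ_two, smul_smul,
      Complex.I_mul_I]

lemma Lmat_apply_commute (η : ℂ) (n : Fin N) (lam mu : ℂ)
    {X : Matrix (Fin N → Fin 2) (Fin N → Fin 2) ℂ} (hX : ∀ α β, Commute (Ee n α β) X)
    (a b : Fin 2) : Commute (Lmat η n lam mu a b) X := by
  fin_cases a <;> fin_cases b <;> simp only [Lmat, Fin.zero_eta, Fin.mk_one, of_apply,
    cons_val_zero, cons_val_one, cons_val', cons_val_fin_one, empty_val']
  · exact (hX 0 0).add_left ((hX 1 1).smul_left _)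
  · exact (hX 1 0).smul_left _
  · exact (hX 0 1).smul_left _
  · exact ((hX 0 0).smul_left _).add_left (hX 1 1)

lemma Lmat_apply_commute_Lmat_apply (η : ℂ) {n m : Fin N} (h : n ≠ m) (lam mu lam' mu' : ℂ)
    (a b a' b' : Fin 2) : Commute (Lmat η n lam mu a b) (Lmat η m lam' mu' a' b') :=
  Lmat_apply_commute η n lam mu (fun α β =>
    (Lmat_apply_commute η m lam' mu' (fun γ δ => (Ee_commute_of_ne h α β γ δ).symm) a' b').symm)
    a b

lemma sigyOp_mul_Lmat_transpose_mul_sigyOp_mul_Lmat (η : ℂ) (n : Fin N) (lam ξ : ℂ)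
    (h1 : Complex.sinh (lam - ξ + η) ≠ 0) (h2 : Complex.sinh (lam - ξ) ≠ 0) :
    sigyOp N * (Lmat η n (lam - η) ξ)ᵀ * sigyOp N * Lmat η n lam ξ
      = bf η (lam - ξ - η) • 1 := by
  have hc := cf_eq_cf_sub_mul_bf η (lam - ξ) h2
  rw [sigyOp_mul_transpose_mul_sigyOp, Lmat, Lmat, sub_right_comm,
    bf_sub_eq_bf_sub_cf_mul_cf η _ h2 h1, hc]
  refine Matrix.ext fun i j => ?_
  fin_cases i <;> fin_cases j <;>
    simp [Matrix.mul_apply, Ee_mul_Ee, add_mul, mul_add, smul_smul,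
      ← Ee_zero_zero_add_Ee_one_one n] <;> module

lemma Trtr_eq_list_prod (η : ℂ) (ξ : Fin N → ℂ) (lam : ℂ) :
    Trtr η N ξ lam = ((List.finRange N).reverse.map fun m => Lmat η m lam (ξ m)).prod := by
  rw [Trtr, List.ofFn_eq_map, List.map_reverse]

end Operators

theorem quantum_determinant_inversion_general (η : ℂ)
    (N : ℕ) (ξ : Fin N → ℂ) (lam : ℂ)
    (h1 : ∀ j, Complex.sinh (lam - ξ j + η) ≠ 0)
    (h2 : ∀ j, Complex.sinh (lam - ξ j) ≠ 0) :
    sigyOp N * (Trtr η N ξ (lam - η))ᵀ * sigyOp N * Trtr η N ξ lam =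
      (∏ j : Fin N, bf η (lam - ξ j - η)) • 1 := by
  rw [Trtr_eq_list_prod, Trtr_eq_list_prod,
    Matrix.mul_transpose_list_prod_mul_mul_list_prod (sigyOp N) (sigyOp_mul_self N) _ _ _
      (fun j => sigyOp_mul_Lmat_transpose_mul_sigyOp_mul_Lmat η j lam (ξ j) (h1 j) (h2 j))
      (fun i j hij => Lmat_apply_commute_Lmat_apply η hij _ _ _ _)
      _ (List.nodup_reverse.mpr (List.nodup_finRange N)),
    List.map_reverse, List.prod_reverse, ← List.ofFn_eq_map, List.prod_ofFn]

/-- `[σ^y T^t(λ−η) σ^y]·T(λ) = ∏_j b(λ−ξ_j−η) · Id`, i.e.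
`T(λ)⁻¹ = σ^y T^t(λ−η) σ^y / det_q T(λ)` with `det_q T(λ) = ∏_j b(λ−ξ_j−η)`. -/
theorem quantum_determinant_inversion (η : ℂ) (hη : Complex.sinh η ≠ 0)
    (N : ℕ) (hN : 1 ≤ N) (ξ : Fin N → ℂ) (lam : ℂ)
    (h1 : ∀ j, Complex.sinh (lam - ξ j + η) ≠ 0)
    (h2 : ∀ j, Complex.sinh (lam - ξ j) ≠ 0)
    (h3 : ∀ j, Complex.sinh (lam - ξ j - η) ≠ 0) :
    sigyOp N * (Trtr η N ξ (lam - η))ᵀ * sigyOp N * Trtr η N ξ lam =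
      (∏ j : Fin N, bf η (lam - ξ j - η)) • 1 :=
  quantum_determinant_inversion_general η N ξ lam h1 h2

end
end
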